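/- Fix ℓ ≥ 1. The inverse of the multiple Riordan array (g; f₁, …, f_ℓ) in the multiple Riordan group is (1/(g∘h̄); t·h̄/(f₁∘h̄), t·h̄/(f₂∘h̄), …, t·h̄/(f_ℓ∘h̄)), where h̄ is the compositional inverse of h = (f₁f₂⋯f_ℓ)^{1/ℓ}. -/

import Mathlib

open PowerSeries

/-- Composition `g ∘ f` of formal power series (meaningful when `f` has zero
constant term). -/
noncomputable def pcomp {K : Type*} [Field K] (g f : PowerSeries K) : PowerSeries K :=
  PowerSeries.mk fun n => ∑ k ∈ Finset.range (n + 1), coeff k g * coeff n (f ^ k)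

/-- `f/t`: the coefficient shift of a power series. -/
noncomputable def pdivX {K : Type*} [Field K] (f : PowerSeries K) : PowerSeries K :=
  PowerSeries.mk fun n => coeff (n + 1) f

/-- `g ∈ K[[t^ℓ]]`. -/
def InTl {K : Type*} [Field K] (ℓ : ℕ) (g : PowerSeries K) : Prop :=
  ∀ n : ℕ, ¬ ℓ ∣ n → coeff n g = 0

/-- A multiplier function: `f ∈ t·K[[t^ℓ]]` with `f'(0) ≠ 0`. -/
def IsMult {K : Type*} [Field K] (ℓ : ℕ) (f : PowerSeries K) : Prop :=
  constantCoeff f = 0 ∧ (∀ n : ℕ, n % ℓ ≠ 1 % ℓ → coeff n f = 0) ∧ coeff 1 f ≠ 0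

/-- The multiple Riordan product, with chosen roots carried as data. -/
noncomputable def mrMul {K : Type*} [Field K] {ℓ : ℕ}
    (p q : PowerSeries K × (Fin ℓ → PowerSeries K) × PowerSeries K) :
    PowerSeries K × (Fin ℓ → PowerSeries K) × PowerSeries K :=
  (p.1 * pcomp q.1 p.2.2,
    fun j => pdivX (p.2.1 j) * (pdivX p.2.2)⁻¹ * pcomp (q.2.1 j) p.2.2,
    pcomp q.2.2 p.2.2)

/-!
`pcomp g f` is Mathlib's substitution `g.subst f` as soon as `f` has zero constant term, so
`pcomp · f` is a ring homomorphism and composition is associative. With `h̄ ∘ h = t`, the first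
components of both products are `g · (g ∘ h̄)⁻¹ ∘ h = g · g⁻¹`. For the multipliers put
`u_j = (f_j ∘ h̄)/t`: composing `t · u_j = f_j ∘ h̄` with `h` gives `h · (u_j ∘ h) = f_j`, so
`(f_j/h) · (h̄ · u_j⁻¹) ∘ h = (u_j ∘ h) · t · (u_j ∘ h)⁻¹ = t`; in the other order,
`(h̄ u_j⁻¹ / h̄) · (f_j ∘ h̄) = u_j⁻¹ · t · u_j = t`.
-/

theorem PowerSeries.coeff_pow_eq_zero_of_lt {R : Type*} [CommRing R] {f : R⟦X⟧}
    (hf : constantCoeff f = 0) {n k : ℕ} (hnk : n < k) : coeff n (f ^ k) = 0 :=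
  coeff_of_lt_order n <|
    (Nat.cast_lt.mpr hnk).trans_le (le_order_pow_of_constantCoeff_eq_zero k hf)

section

variable {K : Type*} [Field K] {e f : K⟦X⟧}

theorem pcomp_eq_subst (hf : constantCoeff f = 0) (g : K⟦X⟧) : pcomp g f = g.subst f := by
  ext n
  rw [coeff_subst' (HasSubst.of_constantCoeff_zero' hf),
    finsum_eq_sum_of_support_subset (s := Finset.range (n + 1))]
  · simp [pcomp]
  · intro k hk
    by_contra hkn
    simp only [Finset.coe_range, Set.mem_Iio, not_lt] at hkn
    exact hk (by simp [coeff_pow_eq_zero_of_lt hf (Nat.lt_of_succ_le hkn)])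

theorem constantCoeff_pcomp (g f : K⟦X⟧) : constantCoeff (pcomp g f) = constantCoeff g := by
  rw [← coeff_zero_eq_constantCoeff_apply, ← coeff_zero_eq_constantCoeff_apply]
  simp [pcomp]

theorem coeff_one_pcomp (g f : K⟦X⟧) : coeff 1 (pcomp g f) = coeff 1 g * coeff 1 f := by
  simp [pcomp, Finset.sum_range_succ, coeff_one]

theorem pcomp_mul (hf : constantCoeff f = 0) (a b : K⟦X⟧) :
    pcomp (a * b) f = pcomp a f * pcomp b f := by
  simp only [pcomp_eq_subst hf, subst_mul (HasSubst.of_constantCoeff_zero' hf)]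

theorem pcomp_X (hf : constantCoeff f = 0) : pcomp X f = f := by
  rw [pcomp_eq_subst hf, subst_X (HasSubst.of_constantCoeff_zero' hf)]

theorem pcomp_X_right (g : K⟦X⟧) : pcomp g X = g := by
  rw [pcomp_eq_subst constantCoeff_X, X_subst]

theorem pcomp_pcomp (hf : constantCoeff f = 0) (he : constantCoeff e = 0) (g : K⟦X⟧) :
    pcomp (pcomp g f) e = pcomp g (pcomp f e) := by
  rw [pcomp_eq_subst (by rwa [constantCoeff_pcomp] : constantCoeff (pcomp f e) = 0)]
  simp only [pcomp_eq_subst hf, pcomp_eq_subst he]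
  exact subst_comp_subst_apply (.of_constantCoeff_zero' hf) (.of_constantCoeff_zero' he) g

theorem pcomp_inv (hf : constantCoeff f = 0) (g : K⟦X⟧) : pcomp g⁻¹ f = (pcomp g f)⁻¹ := by
  by_cases hg : constantCoeff g = 0
  · rw [PowerSeries.inv_eq_zero.mpr hg,
      PowerSeries.inv_eq_zero.mpr (by rwa [constantCoeff_pcomp])]
    ext n; simp [pcomp]
  · rw [eq_inv_iff_mul_eq_one (by rwa [constantCoeff_pcomp]), ← pcomp_mul hf,
      PowerSeries.inv_mul_cancel g hg]
    ext n; simp [pcomp, coeff_one]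

theorem coeff_one_mul_coeff_one_of_pcomp_eq_X {g : K⟦X⟧} (hgf : pcomp g f = X) :
    coeff 1 g * coeff 1 f = 1 := by
  rw [← coeff_one_pcomp, hgf, coeff_one_X]

theorem constantCoeff_pdivX (a : K⟦X⟧) : constantCoeff (pdivX a) = coeff 1 a := by
  rw [← coeff_zero_eq_constantCoeff_apply, pdivX, coeff_mk]

theorem pdivX_X_mul (a : K⟦X⟧) : pdivX (X * a) = a := by
  ext n
  rw [pdivX, coeff_mk, coeff_succ_X_mul]

theorem X_mul_pdivX {a : K⟦X⟧} (ha : constantCoeff a = 0) : X * pdivX a = a := by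
  ext (_ | n)
  · simp [ha]
  · rw [coeff_succ_X_mul, pdivX, coeff_mk]

theorem pdivX_mul {a : K⟦X⟧} (ha : constantCoeff a = 0) (b : K⟦X⟧) :
    pdivX (a * b) = pdivX a * b := by
  conv_lhs => rw [← X_mul_pdivX ha, mul_assoc, pdivX_X_mul]

theorem pdivX_pcomp (hf : constantCoeff f = 0) {g : K⟦X⟧} (hg : constantCoeff g = 0) :
    pdivX (pcomp g f) = pdivX f * pcomp (pdivX g) f := by
  conv_lhs => rw [← X_mul_pdivX hg, pcomp_mul hf, pcomp_X hf, pdivX_mul hf]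

theorem multiplier_mul_inv_cancel {f h hbar : K⟦X⟧} (hf0 : constantCoeff f = 0)
    (hF1 : coeff 1 (pcomp f hbar) ≠ 0) (h0 : constantCoeff h = 0) (h1 : coeff 1 h ≠ 0)
    (hbar0 : constantCoeff hbar = 0) (hinv : pcomp hbar h = X) :
    pdivX f * (pdivX h)⁻¹ * pcomp (hbar * (pdivX (pcomp f hbar))⁻¹) h = X := by
  have hF0 : constantCoeff (pcomp f hbar) = 0 := by rwa [constantCoeff_pcomp]
  have hf : pdivX f = pdivX h * pcomp (pdivX (pcomp f hbar)) h := by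
    rw [← pdivX_pcomp h0 hF0, pcomp_pcomp hbar0 h0, hinv, pcomp_X_right]
  rw [pcomp_mul h0, hinv, pcomp_inv h0, hf]
  set U := pcomp (pdivX (pcomp f hbar)) h
  have hh : pdivX h * (pdivX h)⁻¹ = 1 :=
    PowerSeries.mul_inv_cancel _ (by rwa [constantCoeff_pdivX])
  have hU : U * U⁻¹ = 1 :=
    PowerSeries.mul_inv_cancel _ (by rwa [constantCoeff_pcomp, constantCoeff_pdivX])
  linear_combination (X * U * U⁻¹) * hh + X * hU

theorem multiplier_inv_mul_cancel {a F : K⟦X⟧} (ha0 : constantCoeff a = 0) (ha1 : coeff 1 a ≠ 0)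
    (hF0 : constantCoeff F = 0) (hF1 : coeff 1 F ≠ 0) :
    pdivX (a * (pdivX F)⁻¹) * (pdivX a)⁻¹ * F = X := by
  have ha : pdivX a * (pdivX a)⁻¹ = 1 :=
    PowerSeries.mul_inv_cancel _ (by rwa [constantCoeff_pdivX])
  have hF : pdivX F * (pdivX F)⁻¹ = 1 :=
    PowerSeries.mul_inv_cancel _ (by rwa [constantCoeff_pdivX])
  rw [pdivX_mul ha0]
  linear_combination (X * pdivX F * (pdivX F)⁻¹) * ha + X * hF
    - pdivX a * (pdivX F)⁻¹ * (pdivX a)⁻¹ * X_mul_pdivX hF0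

end

theorem multiple_riordan_inverse_general {K : Type*} [Field K]
    (ℓ : ℕ)
    (g : PowerSeries K) (f : Fin ℓ → PowerSeries K) (h hbar : PowerSeries K)
    (hp : InTl ℓ g ∧ constantCoeff g ≠ 0 ∧ (∀ j, IsMult ℓ (f j)) ∧
      IsMult ℓ h ∧ h ^ ℓ = ∏ j, f j)
    (hbar0 : constantCoeff hbar = 0)
    (hinv1 : pcomp h hbar = X) (hinv2 : pcomp hbar h = X) :
    mrMul (g, f, h)
        ((pcomp g hbar)⁻¹, fun j => hbar * (pdivX (pcomp (f j) hbar))⁻¹, hbar) =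
      (1, fun _ => X, X) ∧
    mrMul ((pcomp g hbar)⁻¹, fun j => hbar * (pdivX (pcomp (f j) hbar))⁻¹, hbar)
        (g, f, h) =
      (1, fun _ => X, X) := by
  obtain ⟨-, hg, hf, ⟨h0, -, h1⟩, -⟩ := hp
  have hbar1 : coeff 1 hbar ≠ 0 :=
    left_ne_zero_of_mul_eq_one (coeff_one_mul_coeff_one_of_pcomp_eq_X hinv2)
  have hF0 (j) : constantCoeff (pcomp (f j) hbar) = 0 := by
    rw [constantCoeff_pcomp]; exact (hf j).1
  have hF1 (j) : coeff 1 (pcomp (f j) hbar) ≠ 0 := by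
    rw [coeff_one_pcomp]; exact mul_ne_zero (hf j).2.2 hbar1
  have hG : constantCoeff (pcomp g hbar) ≠ 0 := by rwa [constantCoeff_pcomp]
  simp only [mrMul, Prod.mk.injEq]
  refine ⟨⟨?_, funext fun j => multiplier_mul_inv_cancel (hf j).1 (hF1 j) h0 h1 hbar0 hinv2,
    hinv2⟩, ⟨PowerSeries.inv_mul_cancel _ hG,
    funext fun j => multiplier_inv_mul_cancel hbar0 hbar1 (hF0 j) (hF1 j), hinv1⟩⟩
  rw [pcomp_inv h0, pcomp_pcomp hbar0 h0, hinv2, pcomp_X_right, PowerSeries.mul_inv_cancel g hg]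

/-- The inverse of `(g; f₁, …, f_ℓ)` in the multiple Riordan group is
`(1/(g∘h̄); t·h̄/(f₁∘h̄), …, t·h̄/(f_ℓ∘h̄))`, where `h̄` is the compositional
inverse of `h = (f₁⋯f_ℓ)^{1/ℓ}`.  (Here `t·h̄/(f_j∘h̄) = h̄·((f_j∘h̄)/t)⁻¹`.) -/
theorem multiple_riordan_inverse {K : Type*} [Field K] [CharZero K]
    (ℓ : ℕ) (hℓ : 1 ≤ ℓ)
    (g : PowerSeries K) (f : Fin ℓ → PowerSeries K) (h hbar : PowerSeries K)
    (hp : InTl ℓ g ∧ constantCoeff g ≠ 0 ∧ (∀ j, IsMult ℓ (f j)) ∧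
      IsMult ℓ h ∧ h ^ ℓ = ∏ j, f j)
    (hbar0 : constantCoeff hbar = 0)
    (hinv1 : pcomp h hbar = X) (hinv2 : pcomp hbar h = X) :
    mrMul (g, f, h)
        ((pcomp g hbar)⁻¹, fun j => hbar * (pdivX (pcomp (f j) hbar))⁻¹, hbar) =
      (1, fun _ => X, X) ∧
    mrMul ((pcomp g hbar)⁻¹, fun j => hbar * (pdivX (pcomp (f j) hbar))⁻¹, hbar)
        (g, f, h) =
      (1, fun _ => X, X) :=
  multiple_riordan_inverse_general ℓ g f h hbar hp hbar0 hinv1 hinv2
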